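/- arXiv:1005.4566 — 3 statements merged into one kernel-verified Lean document; each statement's English description precedes it below -/
import Mathlib

section
/- For every prime p, there exists a matrix M ∈ GL₄(ℤ_p) such that M·Mᵀ = -I; equivalently, the quadratic forms x₁²+x₂²+x₃²+x₄² and -(x₁²+x₂²+x₃²+x₄²) are equivalent over ℤ_p. -/
/-!
Left multiplication by a quaternion `q = a + bi + cj + dk` is a similitude of norm
`a² + b² + c² + d²`, so it suffices that `-1` is a sum of four squares in `ℤ_[p]`. For odd `p`,
`-1 = a² + b²` has a solution mod `p` with `a ≢ 0`, which Hensel's lemma lifts. For `p = 2`,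
`-7 ≡ 1 mod 8` is a square in `ℤ_[2]` and `-1 = 1² + 1² + 2² + (-7)`.
-/

open Polynomial
open scoped Matrix

namespace Matrix

variable {n R : Type*} [Fintype n] [DecidableEq n] [CommRing R] {M : Matrix n n R}

theorem isUnit_det_of_mul_transpose_eq_neg_one (h : M * Mᵀ = -1) : IsUnit M.det :=
  isUnit_det_of_right_inverse (B := -Mᵀ) (by rw [Matrix.mul_neg, h, neg_neg])

theorem transpose_mul_eq_neg_one_of_mul_transpose_eq_neg_one (h : M * Mᵀ = -1) :
    Mᵀ * M = -1 := by
  have : -Mᵀ * M = 1 := mul_eq_one_comm.mp (by rw [Matrix.mul_neg, h, neg_neg])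
  rw [← neg_eq_iff_eq_neg, ← Matrix.neg_mul, this]

theorem sum_mulVec_sq_of_mul_transpose_eq_neg_one (h : M * Mᵀ = -1) (x : n → R) :
    ∑ i, (M *ᵥ x) i ^ 2 = -∑ i, x i ^ 2 := by
  have hMtM := transpose_mul_eq_neg_one_of_mul_transpose_eq_neg_one h
  calc ∑ i, (M *ᵥ x) i ^ 2 = (M *ᵥ x) ⬝ᵥ (M *ᵥ x) := by simp only [dotProduct, sq]
    _ = ((Mᵀ * M) *ᵥ x) ⬝ᵥ x := by
      rw [dotProduct_mulVec, ← mulVec_mulVec, mulVec_transpose]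
    _ = -∑ i, x i ^ 2 := by
      rw [hMtM, neg_mulVec, one_mulVec, neg_dotProduct]
      simp only [dotProduct, sq]

end Matrix

section Quaternion

variable {R : Type*} [CommRing R]

/-- The rows are the coordinates of `q`, `iq`, `jq`, `kq` for `q = a + bi + cj + dk`. -/
def quaternionMulMatrix (a b c d : R) : Matrix (Fin 4) (Fin 4) R :=
  !![a, b, c, d; -b, a, -d, c; -c, d, a, -b; -d, -c, b, a]

theorem quaternionMulMatrix_mul_transpose (a b c d : R) :
    quaternionMulMatrix a b c d * (quaternionMulMatrix a b c d)ᵀ =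
      (a ^ 2 + b ^ 2 + c ^ 2 + d ^ 2) • 1 := by
  ext i j
  fin_cases i <;> fin_cases j <;>
    simp [quaternionMulMatrix, Matrix.mul_apply, Fin.sum_univ_four] <;> ring

end Quaternion

namespace PadicInt

variable {p : ℕ} [Fact p.Prime]

theorem exists_sq_eq_of_norm_sq_sub_lt {a c : ℤ_[p]} (h : ‖a ^ 2 - c‖ < ‖2 * a‖ ^ 2) :
    ∃ z : ℤ_[p], z ^ 2 = c := by
  have hnorm : ‖(X ^ 2 - C c).aeval a‖ < ‖(X ^ 2 - C c).derivative.aeval a‖ ^ 2 := by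
    simpa [derivative_pow] using h
  obtain ⟨z, hz, -⟩ := hensels_lemma hnorm
  exact ⟨z, by simpa [sub_eq_zero] using hz⟩

theorem exists_sq_add_sq_eq_neg_one (hp : p ≠ 2) : ∃ a b : ℤ_[p], a ^ 2 + b ^ 2 = -1 := by
  obtain ⟨a, b, hab, ha⟩ : ∃ a b : ZMod p, a ^ 2 + b ^ 2 = -1 ∧ a ≠ 0 := by
    obtain ⟨a, b, hab⟩ := ZMod.sq_add_sq p (-1)
    by_cases ha : a = 0
    · refine ⟨b, a, by rwa [add_comm], fun hb => ?_⟩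
      simp [ha, hb] at hab
    · exact ⟨a, b, hab, ha⟩
  have hdvd : p ∣ a.val ^ 2 + b.val ^ 2 + 1 := by
    rw [← ZMod.natCast_eq_zero_iff]
    push_cast [ZMod.natCast_val, ZMod.cast_id]
    rw [hab, neg_add_cancel]
  have hcop : p.Coprime (2 * a.val) := by
    refine Nat.Coprime.mul_right ((Nat.coprime_primes Fact.out Nat.prime_two).mpr hp) ?_
    rwa [Nat.Prime.coprime_iff_not_dvd Fact.out, ← ZMod.natCast_eq_zero_iff, ZMod.natCast_val,
      ZMod.cast_id]
  obtain ⟨z, hz⟩ := exists_sq_eq_of_norm_sq_sub_lt (a := a.val) (c := -(b.val ^ 2 + 1)) (by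
    have hlt := norm_natCast_lt_one_iff.mpr hdvd
    have hone := norm_natCast_eq_one_iff.mpr hcop
    push_cast at hlt hone
    rw [sub_neg_eq_add, ← add_assoc, hone, one_pow]
    exact hlt)
  exact ⟨z, b.val, by rw [hz]; ring⟩

theorem exists_sq_eq_neg_seven_two_adic : ∃ z : ℤ_[2], z ^ 2 = -7 := by
  refine exists_sq_eq_of_norm_sq_sub_lt (a := 1) ?_
  have h2 : ‖(2 : ℤ_[2])‖ = 2⁻¹ := by simpa using norm_p (p := 2)
  rw [show (1 : ℤ_[2]) ^ 2 - -7 = 2 ^ 3 by norm_num, mul_one, norm_pow, h2]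
  norm_num

theorem exists_sum_four_sq_eq_neg_one (p : ℕ) [Fact p.Prime] :
    ∃ a b c d : ℤ_[p], a ^ 2 + b ^ 2 + c ^ 2 + d ^ 2 = -1 := by
  rcases eq_or_ne p 2 with rfl | hp
  · obtain ⟨z, hz⟩ := exists_sq_eq_neg_seven_two_adic
    exact ⟨1, 1, 2, z, by rw [hz]; norm_num⟩
  · obtain ⟨a, b, hab⟩ := exists_sq_add_sq_eq_neg_one hp
    exact ⟨a, b, 0, 0, by rw [← hab]; ring⟩

end PadicInt

/-- For every prime `p` there is `M ∈ GL₄(ℤ_[p])` with `M·Mᵀ = -I`; equivalently, the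
quadratic forms `x₁²+x₂²+x₃²+x₄²` and `-(x₁²+x₂²+x₃²+x₄²)` are equivalent over `ℤ_[p]`. -/
theorem quadratic_form_sum_sq_equiv_neg_sum_sq_padic (p : ℕ) [Fact p.Prime] :
    ∃ M : Matrix (Fin 4) (Fin 4) ℤ_[p], IsUnit M.det ∧ M * M.transpose = -1 ∧
      ∀ x : Fin 4 → ℤ_[p], -(∑ i, x i ^ 2) = ∑ i, (M.mulVec x) i ^ 2 := by
  obtain ⟨a, b, c, d, h⟩ := PadicInt.exists_sum_four_sq_eq_neg_one p
  have hM : quaternionMulMatrix a b c d * (quaternionMulMatrix a b c d)ᵀ = -1 := by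
    rw [quaternionMulMatrix_mul_transpose, h, neg_one_smul]
  exact ⟨quaternionMulMatrix a b c d, Matrix.isUnit_det_of_mul_transpose_eq_neg_one hM, hM,
    fun x => (Matrix.sum_mulVec_sq_of_mul_transpose_eq_neg_one hM x).symm⟩
end

section
/- Let p be a prime and m ≥ 4, n ≥ 0. The quadratic form q_{m,n} = Σ_{i=1}^m x_i² − Σ_{i=1}^n y_i² and the quadratic form q_{m-4,n+4} = Σ_{i=1}^{m-4} x_i² − Σ_{i=1}^{n+4} y_i² are equivalent over ℤ_p, i.e., there exists a matrix in GL_{m+n}(ℤ_p) transforming one into the other. -/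
/-!
Over any commutative ring in which `-1 = a² + b² + c² + d²`, the left-multiplication matrix `Q`
of the quaternion `a + bi + cj + dk` satisfies `Qᵀ Q = -1`, so it carries the form
`x₁² + ⋯ + x₄²` to `-(x₁² + ⋯ + x₄²)` and has unit determinant. In `ℤ_[p]` such a
representation exists for every prime `p`: write `8p - 1` as a sum of four squares of integers
and divide by a square root of `1 - 8p`, which exists by Hensel's lemma since `1 - 8p ≡ 1`
modulo `8p`. Applying `Q` to four of the `+1` coordinates of `q_{m,n}` gives `q_{m-4,n+4}`.
-/

open Matrix

section DiagForm

variable {R : Type*} [CommRing R] {ι κ : Type*} [Fintype ι] [DecidableEq ι]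
  [Fintype κ] [DecidableEq κ]

def DiagFormEquiv (w w' : ι → R) : Prop :=
  ∃ M : Matrix ι ι R, IsUnit M.det ∧
    ∀ x : ι → R, ∑ i, w i * x i ^ 2 = ∑ i, w' i * (M *ᵥ x) i ^ 2

namespace DiagFormEquiv

theorem refl (w : ι → R) : DiagFormEquiv w w :=
  ⟨1, by simp, fun x => by simp⟩

theorem sum_elim {w₁ w₁' : ι → R} {w₂ w₂' : κ → R} (h₁ : DiagFormEquiv w₁ w₁')
    (h₂ : DiagFormEquiv w₂ w₂') : DiagFormEquiv (Sum.elim w₁ w₂) (Sum.elim w₁' w₂') := by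
  obtain ⟨M₁, hM₁, hx₁⟩ := h₁
  obtain ⟨M₂, hM₂, hx₂⟩ := h₂
  refine ⟨fromBlocks M₁ 0 0 M₂, by simpa [det_fromBlocks_zero₂₁] using hM₁.mul hM₂, fun x => ?_⟩
  rw [← Sum.elim_comp_inl_inr x, fromBlocks_mulVec]
  simp only [Fintype.sum_sum_type, Sum.elim_inl, Sum.elim_inr, zero_mulVec, add_zero, zero_add]
  exact congrArg₂ (· + ·) (hx₁ _) (hx₂ _)

theorem of_comp_equiv {w w' : ι → R} (e : κ ≃ ι) (h : DiagFormEquiv (w ∘ e) (w' ∘ e)) :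
    DiagFormEquiv w w' := by
  obtain ⟨M, hM, hx⟩ := h
  refine ⟨reindex e e M, by rwa [det_reindex_self], fun x => ?_⟩
  rw [reindex_apply, submatrix_mulVec_equiv, ← e.sum_comp, ← e.sum_comp]
  simpa using hx (x ∘ e)

theorem const_of_transpose_mul_self {M : Matrix ι ι R} {c : R} (hM : Mᵀ * M = c • 1)
    (hc : IsUnit c) : DiagFormEquiv (fun _ : ι => c) (fun _ => 1) := by
  refine ⟨M, ?_, fun x => ?_⟩
  · have h := congrArg det hM
    rw [det_mul, det_transpose, det_smul, det_one, mul_one] at h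
    exact isUnit_of_mul_isUnit_left (h ▸ hc.pow _)
  · have h : (M *ᵥ x) ⬝ᵥ (M *ᵥ x) = c • x ⬝ᵥ x := by
      rw [dotProduct_mulVec, ← mulVec_transpose, mulVec_mulVec, hM, smul_mulVec, one_mulVec,
        smul_dotProduct]
    simpa [dotProduct, Finset.mul_sum, sq, mul_assoc] using h.symm

end DiagFormEquiv

def quatMatrix (a b c d : R) : Matrix (Fin 4) (Fin 4) R :=
  !![a, -b, -c, -d; b, a, -d, c; c, d, a, -b; d, -c, b, a]

theorem quatMatrix_transpose_mul_self (a b c d : R) :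
    (quatMatrix a b c d)ᵀ * quatMatrix a b c d = (a ^ 2 + b ^ 2 + c ^ 2 + d ^ 2) • 1 := by
  ext i j
  fin_cases i <;> fin_cases j <;>
    simp [quatMatrix, mul_apply, Fin.sum_univ_four, one_apply] <;> ring

theorem diagFormEquiv_neg_one_one_of_sum_four_sq {a b c d : R}
    (h : a ^ 2 + b ^ 2 + c ^ 2 + d ^ 2 = -1) :
    DiagFormEquiv (fun _ : Fin 4 => (-1 : R)) (fun _ => 1) :=
  .const_of_transpose_mul_self (h ▸ quatMatrix_transpose_mul_self a b c d) isUnit_one.neg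

end DiagForm

namespace PadicInt

variable {p : ℕ} [Fact p.Prime]

theorem isSquare_of_norm_sub_one_lt {u : ℤ_[p]} (h : ‖u - 1‖ < ‖(2 : ℤ_[p])‖ ^ 2) :
    IsSquare u := by
  obtain ⟨z, hz, -⟩ := hensels_lemma (p := p) (F := Polynomial.X ^ 2 - Polynomial.C u) (a := 1)
    (by simpa [norm_sub_rev, one_add_one_eq_two] using h)
  have hz : z ^ 2 = u := by simpa [sub_eq_zero] using hz
  exact ⟨z, by rw [← hz, sq]⟩

theorem norm_eight_mul_p_lt : ‖(8 * p : ℤ_[p])‖ < ‖(2 : ℤ_[p])‖ ^ 2 := by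
  have h8 : (8 : ℤ_[p]) = 2 ^ 3 := by norm_num
  rw [norm_mul, h8, norm_pow, norm_p]
  calc ‖(2 : ℤ_[p])‖ ^ 3 * (p : ℝ)⁻¹ < ‖(2 : ℤ_[p])‖ ^ 3 * 1 :=
        mul_lt_mul_of_pos_left
          (inv_lt_one_of_one_lt₀ (by exact_mod_cast (Fact.out : p.Prime).one_lt)) (by simp)
    _ ≤ ‖(2 : ℤ_[p])‖ ^ 2 := by
        rw [mul_one]
        exact pow_le_pow_of_le_one (norm_nonneg _) (norm_le_one _) (by norm_num)

theorem exists_sq_add_sq_add_sq_add_sq_eq_neg_one :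
    ∃ a b c d : ℤ_[p], a ^ 2 + b ^ 2 + c ^ 2 + d ^ 2 = -1 := by
  obtain ⟨s, hs⟩ : IsSquare (1 - 8 * p : ℤ_[p]) :=
    isSquare_of_norm_sub_one_lt (by rw [sub_sub_cancel_left, norm_neg]; exact norm_eight_mul_p_lt)
  have hs_unit : IsUnit s := by
    have h : IsUnit (1 - 8 * p : ℤ_[p]) :=
      IsLocalRing.isUnit_one_sub_self_of_mem_nonunits _ <| not_isUnit_iff.mpr <|
        norm_eight_mul_p_lt.trans_le (pow_le_one₀ (norm_nonneg _) (norm_le_one _))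
    exact isUnit_of_mul_isUnit_left (hs ▸ h)
  obtain ⟨t, hts⟩ := hs_unit.exists_left_inv
  obtain ⟨a, b, c, d, habcd⟩ := Nat.sum_four_squares (8 * p - 1)
  have habcd' : (a ^ 2 + b ^ 2 + c ^ 2 + d ^ 2 + 1 : ℤ_[p]) = 8 * p := by
    have hp := (Fact.out : p.Prime).one_lt
    exact_mod_cast (by omega : a ^ 2 + b ^ 2 + c ^ 2 + d ^ 2 + 1 = 8 * p)
  exact ⟨a * t, b * t, c * t, d * t,
    by linear_combination t ^ 2 * habcd' - t ^ 2 * hs - (t * s + 1) * hts⟩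

end PadicInt

/-- For a prime `p` and `m ≥ 4`, the diagonal quadratic forms `q_{m,n}` (with `m`
coefficients `+1` and `n` coefficients `-1`) and `q_{m-4,n+4}` are equivalent over `ℤ_[p]`:
some matrix in `GL_{m+n}(ℤ_[p])` transforms one into the other. -/
theorem q_m_n_equiv_q_m_sub_four_n_add_four_padic (p : ℕ) [Fact p.Prime]
    (m n : ℕ) (hm : 4 ≤ m) :
    ∃ M : Matrix (Fin (m + n)) (Fin (m + n)) ℤ_[p], IsUnit M.det ∧
      ∀ x : Fin (m + n) → ℤ_[p],
        (∑ i : Fin (m + n), (if i.val < m - 4 then (1 : ℤ_[p]) else -1) * x i ^ 2) =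
        (∑ i : Fin (m + n), (if i.val < m then (1 : ℤ_[p]) else -1) * (M.mulVec x) i ^ 2) := by
  obtain ⟨k, rfl⟩ : ∃ k, m = k + 4 := ⟨m - 4, by omega⟩
  obtain ⟨a, b, c, d, habcd⟩ := PadicInt.exists_sq_add_sq_add_sq_add_sq_eq_neg_one (p := p)
  let e : (Fin k ⊕ Fin 4) ⊕ Fin n ≃ Fin (k + 4 + n) :=
    (Equiv.sumCongr finSumFinEquiv (Equiv.refl _)).trans finSumFinEquiv
  have hw : (fun i : Fin (k + 4 + n) => if i.val < k + 4 - 4 then (1 : ℤ_[p]) else -1) ∘ e =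
      Sum.elim (Sum.elim (fun _ => 1) (fun _ => -1)) (fun _ => -1) := by
    ext ((i | i) | i) <;> simp [e, add_assoc]
  have hw' : (fun i : Fin (k + 4 + n) => if i.val < k + 4 then (1 : ℤ_[p]) else -1) ∘ e =
      Sum.elim (Sum.elim (fun _ => 1) (fun _ => 1)) (fun _ => -1) := by
    ext ((i | i) | i) <;> simp [e, Nat.lt_add_right 4 (Fin.is_lt _)]
  refine DiagFormEquiv.of_comp_equiv e ?_
  rw [hw, hw']
  exact ((DiagFormEquiv.refl _).sum_elim (diagFormEquiv_neg_one_one_of_sum_four_sq habcd)).sum_elim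
    (.refl _)
end

section
/- Two finitely generated groups Γ₁ and Γ₂ have isomorphic profinite completions if and only if they have the same set of isomorphism classes of finite quotients. -/
/-- The index set of finite-index normal subgroups of `G`. -/
def NormalFI (G : Type*) [Group G] : Type _ :=
  {N : Subgroup G // N.Normal ∧ N.FiniteIndex}

instance (G : Type*) [Group G] (N : NormalFI G) : N.1.Normal := N.2.1

/-- The profinite completion of a group `G`, realized as the subgroup of compatible
elements of the product of all finite quotients of `G`. -/
def ProfiniteCompletion (G : Type*) [Group G] :
    Subgroup (∀ N : NormalFI G, G ⧸ N.1) where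
  carrier := {x | ∀ (N M : NormalFI G) (h : N.1 ≤ M.1),
    QuotientGroup.map N.1 M.1 (MonoidHom.id G) h (x N) = x M}
  one_mem' := by
    intro N M h
    simp
  mul_mem' := by
    intro a b ha hb N M h
    simp only [Pi.mul_apply, map_mul, ha N M h, hb N M h]
  inv_mem' := by
    intro a ha N M h
    simp only [Pi.inv_apply, map_inv, ha N M h]

instance (G : Type*) [Group G] (N : NormalFI G) : TopologicalSpace (G ⧸ N.1) := ⊥

instance (G : Type*) [Group G] (N : NormalFI G) : DiscreteTopology (G ⧸ N.1) := ⟨rfl⟩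

instance (G : Type*) [Group G] (N : NormalFI G) : IsTopologicalGroup (G ⧸ N.1) where
  continuous_mul := continuous_of_discreteTopology
  continuous_inv := continuous_of_discreteTopology

/-- The canonical homomorphism from `G` to its profinite completion. -/
def toProfiniteCompletion (G : Type*) [Group G] : G →* ProfiniteCompletion G where
  toFun g := ⟨fun N => QuotientGroup.mk g, fun N M h => by
    simp [QuotientGroup.map_mk]
    rfl⟩
  map_one' := by
    ext N
    simp
  map_mul' g h := by
    ext N
    simp

/-!
Let `K_n(Γ)` be the intersection of the kernels of all actions of `Γ` on `n` points. For finitely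
generated `Γ` it has finite index, every finite-index normal subgroup contains some `K_n(Γ)`, and
every homomorphism `Γ' → Γ/K_n(Γ)` kills `K_n(Γ')`.

If `Γ₁` and `Γ₂` have the same finite quotients, the surjections `Γ₁ → Γ₂/K_n(Γ₂)` form an inverse
system of finite nonempty sets, so König's lemma gives a compatible family of them. Each factors
through `Γ₁/K_n(Γ₁)`, and is an isomorphism there because `Γ₂` also surjects onto `Γ₁/K_n(Γ₁)`, so
both quotients have the same order. Since the `K_n` are cofinal, these isomorphisms assemble into a
continuous isomorphism of the completions.

Conversely, a continuous isomorphism turns a finite quotient `Γ₁ → Q` into a continuous surjection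
`Γ̂₂ → Q`; as `Γ₂` is dense in `Γ̂₂` and `Q` is discrete, its restriction to `Γ₂` is still onto.
-/

open QuotientGroup

namespace QuotientGroup

variable {G : Type*} [Group G]

abbrev mapOfLE {N M : Subgroup G} [N.Normal] [M.Normal] (h : N ≤ M) : G ⧸ N →* G ⧸ M :=
  map N M (MonoidHom.id G) h

theorem mapOfLE_mapOfLE {N M P : Subgroup G} [N.Normal] [M.Normal] [P.Normal]
    (h₁ : N ≤ M) (h₂ : M ≤ P) (q : G ⧸ N) :
    mapOfLE h₂ (mapOfLE h₁ q) = mapOfLE (h₁.trans h₂) q :=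
  map_map N M P (MonoidHom.id G) (MonoidHom.id G) h₁ h₂ (h₁.trans h₂) q

theorem mapOfLE_surjective {N M : Subgroup G} [N.Normal] [M.Normal] (h : N ≤ M) :
    Function.Surjective (mapOfLE h) :=
  map_surjective_of_surjective N M (MonoidHom.id G) mk_surjective h

end QuotientGroup

instance finite_monoidHom_of_fg (G Q : Type*) [Group G] [Group.FG G] [Group Q] [Finite Q] :
    Finite (G →* Q) := by
  obtain ⟨S, hS⟩ := Group.FG.out (G := G)
  refine Finite.of_injective (fun f : G →* Q => fun s : S => f s) fun f g hfg => ?_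
  exact MonoidHom.eq_of_eqOn_dense hS fun x hx => congrFun hfg ⟨x, hx⟩

section PermKernel

variable {G H : Type*} [Group G] [Group H]

-- Equivalently, the intersection of all subgroups of index at most `n`; phrased through actions it
-- is visibly of finite index and mapped into itself by every homomorphism.
variable (G) in
def permKernel (n : ℕ) : Subgroup G :=
  ⨅ φ : G →* Equiv.Perm (Fin n), φ.ker

instance (n : ℕ) : (permKernel G n).Normal :=
  Subgroup.normal_iInf_normal fun φ => φ.normal_ker

theorem mem_permKernel {n : ℕ} {g : G} :
    g ∈ permKernel G n ↔ ∀ φ : G →* Equiv.Perm (Fin n), φ g = 1 := by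
  simp only [permKernel, Subgroup.mem_iInf, MonoidHom.mem_ker]

instance [Group.FG G] (n : ℕ) : (permKernel G n).FiniteIndex :=
  Subgroup.finiteIndex_iInf fun φ => Subgroup.finiteIndex_ker φ

theorem permKernel_antitone : Antitone (permKernel (G := G)) := by
  intro n m hnm g hg
  rw [mem_permKernel] at hg ⊢
  intro φ
  have ι : Fin n ↪ Fin m := Fin.castLEEmb hnm
  apply Equiv.Perm.viaEmbeddingHom_injective ι
  rw [map_one]
  exact hg ((Equiv.Perm.viaEmbeddingHom ι).comp φ)

theorem permKernel_le_of_index_le (N : Subgroup G) [N.FiniteIndex] {n : ℕ} (h : N.index ≤ n) :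
    permKernel G n ≤ N := by
  have : Fintype (G ⧸ N) := Fintype.ofFinite _
  obtain ⟨ι⟩ : Nonempty (G ⧸ N ↪ Fin n) := Function.Embedding.nonempty_of_card_le <| by
    rwa [Fintype.card_fin, ← Nat.card_eq_fintype_card, ← Subgroup.index]
  intro g hg
  have hφ := mem_permKernel.mp hg ((Equiv.Perm.viaEmbeddingHom ι).comp (MulAction.toPermHom G (G ⧸ N)))
  rw [MonoidHom.comp_apply, ← map_one (Equiv.Perm.viaEmbeddingHom ι),
    (Equiv.Perm.viaEmbeddingHom_injective ι).eq_iff] at hφ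
  have := congrArg (fun σ : Equiv.Perm (G ⧸ N) => σ ((1 : G) : G ⧸ N)) hφ
  simpa [QuotientGroup.eq] using this

theorem map_permKernel_le (f : H →* G) (n : ℕ) : (permKernel H n).map f ≤ permKernel G n := by
  rintro _ ⟨h, hh, rfl⟩
  exact mem_permKernel.mpr fun φ => mem_permKernel.mp hh (φ.comp f)

theorem permKernel_quotient_eq_bot (n : ℕ) :
    permKernel (G ⧸ permKernel G n) n = ⊥ := by
  refine (Subgroup.eq_bot_iff_forall _).mpr fun q hq => ?_
  induction q using QuotientGroup.induction_on with
  | H g =>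
    refine (QuotientGroup.eq_one_iff g).mpr (mem_permKernel.mpr fun φ => ?_)
    have hle : permKernel G n ≤ φ.ker := iInf_le _ φ
    exact mem_permKernel.mp hq (QuotientGroup.lift _ φ hle)

theorem permKernel_le_ker (n : ℕ) (f : H →* G ⧸ permKernel G n) : permKernel H n ≤ f.ker := by
  rw [← MonoidHom.comap_bot, ← Subgroup.map_le_iff_le_comap, ← permKernel_quotient_eq_bot n]
  exact map_permKernel_le f n

end PermKernel

section CompatibleLevels

open CategoryTheory

variable {G H : Type*} [Group G] [Group H]

variable (G H) in
def surjectionSystem : ℕᵒᵖ ⥤ Type _ where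
  obj n := {f : G →* H ⧸ permKernel H n.unop // Function.Surjective f}
  map h := TypeCat.ofHom fun f =>
    ⟨(mapOfLE (permKernel_antitone (leOfHom h.unop))).comp f.1,
      (mapOfLE_surjective (permKernel_antitone (leOfHom h.unop))).comp f.2⟩
  map_id n := by
    refine ConcreteCategory.hom_ext _ _ fun f => Subtype.ext (MonoidHom.ext fun g => ?_)
    simp only [TypeCat.ofHom_apply, types_id_apply, MonoidHom.comp_apply]
    exact map_id_apply _ (x := f.1 g)
  map_comp h₁ h₂ := by
    refine ConcreteCategory.hom_ext _ _ fun f => Subtype.ext (MonoidHom.ext fun g => ?_)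
    simp only [TypeCat.ofHom_apply, types_comp_apply, MonoidHom.comp_apply]
    exact (mapOfLE_mapOfLE _ _ (f.1 g)).symm

theorem exists_compatible_surjections [Group.FG G] [Group.FG H]
    (h : ∀ n, ∃ f : G →* H ⧸ permKernel H n, Function.Surjective f) :
    ∃ f : ∀ n, G →* H ⧸ permKernel H n, (∀ n, Function.Surjective (f n)) ∧
      ∀ ⦃n m⦄ (hnm : n ≤ m), (mapOfLE (permKernel_antitone hnm)).comp (f m) = f n := by
  have (n : ℕᵒᵖ) : Finite ((surjectionSystem G H).obj n) :=
    inferInstanceAs (Finite {f : G →* H ⧸ permKernel H n.unop // _})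
  have (n : ℕᵒᵖ) : Nonempty ((surjectionSystem G H).obj n) :=
    let ⟨f, hf⟩ := h n.unop
    ⟨(⟨f, hf⟩ : {f : G →* H ⧸ permKernel H n.unop // Function.Surjective f})⟩
  obtain ⟨s, hs⟩ := nonempty_sections_of_finite_inverse_system (surjectionSystem G H)
  let f (n : ℕ) : {f : G →* H ⧸ permKernel H n // Function.Surjective f} := s (.op n)
  exact ⟨fun n => (f n).1, fun n => (f n).2,
    fun n m hnm => congrArg Subtype.val (hs (homOfLE hnm).op)⟩

theorem card_quotient_permKernel_le [Group.FG H] {n : ℕ} (f : H →* G ⧸ permKernel G n)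
    (hf : Function.Surjective f) :
    Nat.card (G ⧸ permKernel G n) ≤ Nat.card (H ⧸ permKernel H n) :=
  Nat.card_le_card_of_surjective _ (lift_surjective_of_surjective _ f hf (permKernel_le_ker n f))

def IsCompatible (φ : ∀ n, G ⧸ permKernel G n ≃* H ⧸ permKernel H n) : Prop :=
  ∀ ⦃n m⦄ (h : n ≤ m) (q : G ⧸ permKernel G m),
    φ n (mapOfLE (permKernel_antitone h) q) = mapOfLE (permKernel_antitone h) (φ m q)

theorem IsCompatible.symm {φ : ∀ n, G ⧸ permKernel G n ≃* H ⧸ permKernel H n}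
    (hφ : IsCompatible φ) : IsCompatible fun n => (φ n).symm := by
  intro n m h q
  apply (φ n).injective
  rw [MulEquiv.apply_symm_apply, hφ h, MulEquiv.apply_symm_apply]

theorem exists_isCompatible [Group.FG G] [Group.FG H]
    (hG : ∀ n, ∃ f : G →* H ⧸ permKernel H n, Function.Surjective f)
    (hH : ∀ n, ∃ f : H →* G ⧸ permKernel G n, Function.Surjective f) :
    ∃ φ : ∀ n, G ⧸ permKernel G n ≃* H ⧸ permKernel H n, IsCompatible φ := by
  obtain ⟨f, hf, hcompat⟩ := exists_compatible_surjections hG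
  have hbij (n : ℕ) : Function.Bijective (lift _ (f n) (permKernel_le_ker n (f n))) := by
    refine (Nat.bijective_iff_surjective_and_card _).mpr
      ⟨lift_surjective_of_surjective _ _ (hf n) _, le_antisymm ?_ ?_⟩
    · obtain ⟨f', hf'⟩ := hH n
      exact card_quotient_permKernel_le f' hf'
    · exact card_quotient_permKernel_le (f n) (hf n)
  refine ⟨fun n => MulEquiv.ofBijective _ (hbij n), fun n m hnm q => ?_⟩
  induction q using QuotientGroup.induction_on with
  | H g => exact (DFunLike.congr_fun (hcompat hnm) g).symm

end CompatibleLevels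

namespace ProfiniteCompletion

variable {G : Type*} [Group G]

def proj (N : NormalFI G) : ProfiniteCompletion G →* G ⧸ N.1 :=
  (Pi.evalMonoidHom (fun N : NormalFI G => G ⧸ N.1) N).comp (ProfiniteCompletion G).subtype

theorem continuous_proj (N : NormalFI G) : Continuous (proj N) :=
  (continuous_apply N).comp continuous_subtype_val

theorem proj_toProfiniteCompletion (N : NormalFI G) (g : G) :
    proj N (toProfiniteCompletion G g) = g :=
  rfl

theorem proj_surjective (N : NormalFI G) : Function.Surjective (proj N) := fun q =>
  let ⟨g, hg⟩ := mk_surjective q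
  ⟨toProfiniteCompletion G g, hg⟩

theorem mapOfLE_proj {N M : NormalFI G} (h : N.1 ≤ M.1) (x : ProfiniteCompletion G) :
    mapOfLE h (proj N x) = proj M x :=
  x.2 N M h

theorem exists_proj_eq (I : Finset (NormalFI G)) (x : ProfiniteCompletion G) :
    ∃ g : G, ∀ N ∈ I, proj N (toProfiniteCompletion G g) = proj N x := by
  have hnormal : (⨅ N ∈ I, N.1).Normal :=
    Subgroup.normal_iInf_normal fun N => Subgroup.normal_iInf_normal fun _ => N.2.1
  let M : NormalFI G := ⟨⨅ N ∈ I, N.1, hnormal, Subgroup.finiteIndex_iInf' _ fun N _ => N.2.2⟩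
  obtain ⟨g, hg⟩ := mk_surjective (proj M x)
  refine ⟨g, fun N hN => ?_⟩
  rw [← mapOfLE_proj (N := M) (iInf₂_le N hN) x, ← hg]
  rfl

theorem denseRange_toProfiniteCompletion : DenseRange (toProfiniteCompletion G) := by
  intro x
  rw [mem_closure_iff]
  rintro _ ⟨V, hV, rfl⟩ hxV
  obtain ⟨I, u, hu, hIV⟩ := isOpen_pi_iff.mp hV x.1 hxV
  obtain ⟨g, hg⟩ := exists_proj_eq I x
  refine ⟨_, hIV fun N hN => ?_, g, rfl⟩
  change proj N (toProfiniteCompletion G g) ∈ u N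
  rw [hg N hN]
  exact (hu N hN).2

end ProfiniteCompletion

theorem DenseRange.surjective_comp {X Y Z : Type*} [TopologicalSpace X] [TopologicalSpace Z]
    [DiscreteTopology Z] {i : Y → X} (hi : DenseRange i) {f : X → Z} (hf : Continuous f)
    (hs : Function.Surjective f) : Function.Surjective (f ∘ i) := fun z =>
  hi.exists_mem_open ((isOpen_discrete {z}).preimage hf) (hs z)

open ProfiniteCompletion

def NormalFI.ker {G Q : Type*} [Group G] [Group Q] [Finite Q] (f : G →* Q) : NormalFI G :=
  ⟨f.ker, f.normal_ker, Subgroup.finiteIndex_ker f⟩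

theorem exists_surjective_of_profiniteCompletion_surjective {G H Q : Type*} [Group G] [Group H]
    [Group Q] [Finite Q] (ψ : ProfiniteCompletion H →* ProfiniteCompletion G)
    (hψ : Continuous ψ) (hψs : Function.Surjective ψ) {f : G →* Q} (hf : Function.Surjective f) :
    ∃ f' : H →* Q, Function.Surjective f' := by
  have hπ : Function.Surjective ((proj (NormalFI.ker f)).comp ψ ∘ toProfiniteCompletion H) :=
    denseRange_toProfiniteCompletion.surjective_comp ((continuous_proj _).comp hψ)
      ((proj_surjective _).comp hψs)
  exact ⟨(lift f.ker f le_rfl).comp (((proj (NormalFI.ker f)).comp ψ).comp (toProfiniteCompletion H)),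
    (lift_surjective_of_surjective f.ker f hf le_rfl).comp hπ⟩

section CompletionMap

variable {G H : Type*} [Group G] [Group H]

def NormalFI.permKernel (G : Type*) [Group G] [Group.FG G] (n : ℕ) : NormalFI G :=
  ⟨_root_.permKernel G n, inferInstance, inferInstance⟩

theorem permKernel_index_le (N : NormalFI H) : permKernel H N.1.index ≤ N.1 :=
  have := N.2.2
  permKernel_le_of_index_le N.1 le_rfl

variable [Group.FG G] (φ : ∀ n, G ⧸ permKernel G n ≃* H ⧸ permKernel H n)

def levelHom (n : ℕ) : ProfiniteCompletion G →* H ⧸ permKernel H n :=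
  (φ n).toMonoidHom.comp (proj (NormalFI.permKernel G n))

theorem levelHom_apply (n : ℕ) (x : ProfiniteCompletion G) :
    levelHom φ n x = φ n (proj (NormalFI.permKernel G n) x) :=
  rfl

variable {φ}

theorem mapOfLE_levelHom (hφ : IsCompatible φ) {n m : ℕ} (hnm : n ≤ m)
    (x : ProfiniteCompletion G) :
    mapOfLE (permKernel_antitone hnm) (levelHom φ m x) = levelHom φ n x :=
  (hφ hnm _).symm.trans <| congrArg (φ n) <|
    mapOfLE_proj (N := NormalFI.permKernel G m) (M := NormalFI.permKernel G n) _ x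

theorem mapOfLE_levelHom_eq (hφ : IsCompatible φ) {N : Subgroup H} [N.Normal] {n m : ℕ}
    (hn : permKernel H n ≤ N) (hm : permKernel H m ≤ N) (x : ProfiniteCompletion G) :
    mapOfLE hn (levelHom φ n x) = mapOfLE hm (levelHom φ m x) := by
  have hmax (k : ℕ) (hk : k ≤ max n m) (hkN : permKernel H k ≤ N) :
      mapOfLE hkN (levelHom φ k x) =
        mapOfLE ((permKernel_antitone hk).trans hkN) (levelHom φ (max n m) x) := by
    rw [← mapOfLE_levelHom hφ hk, mapOfLE_mapOfLE]
  rw [hmax n (le_max_left n m), hmax m (le_max_right n m)]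

variable (φ) in
noncomputable def completionMap (hφ : IsCompatible φ) :
    ProfiniteCompletion G →* ProfiniteCompletion H :=
  (MonoidHom.pi fun N : NormalFI H =>
    (mapOfLE (permKernel_index_le N)).comp (levelHom φ N.1.index)).codRestrict _
    fun x N M h => (mapOfLE_mapOfLE (permKernel_index_le N) h _).trans
      (mapOfLE_levelHom_eq hφ _ (permKernel_index_le M) x)

theorem proj_completionMap (hφ : IsCompatible φ) (x : ProfiniteCompletion G) (N : NormalFI H)
    {n : ℕ} (hn : permKernel H n ≤ N.1) :
    proj N (completionMap φ hφ x) = mapOfLE hn (levelHom φ n x) :=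
  mapOfLE_levelHom_eq hφ (permKernel_index_le N) hn x

theorem continuous_completionMap (hφ : IsCompatible φ) : Continuous (completionMap φ hφ) :=
  continuous_induced_rng.2 <| continuous_pi fun N =>
    (continuous_of_discreteTopology (α := G ⧸ (NormalFI.permKernel G N.1.index).1)
      (f := fun q => mapOfLE (permKernel_index_le N) (φ _ q))).comp (continuous_proj _)

theorem completionMap_symm_completionMap [Group.FG H] (hφ : IsCompatible φ)
    (x : ProfiniteCompletion G) :
    completionMap (fun n => (φ n).symm) hφ.symm (completionMap φ hφ x) = x := by
  refine Subtype.ext (funext fun N => ?_)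
  change proj N (completionMap _ hφ.symm _) = proj N x
  have hlevel (n : ℕ) : proj (NormalFI.permKernel H n) (completionMap φ hφ x) = levelHom φ n x :=
    (proj_completionMap hφ x _ le_rfl).trans (map_id_apply _ (x := levelHom φ n x))
  calc proj N (completionMap _ hφ.symm (completionMap φ hφ x))
      = mapOfLE (permKernel_index_le N)
          ((φ _).symm (proj (NormalFI.permKernel H _) (completionMap φ hφ x))) :=
        proj_completionMap hφ.symm _ N (permKernel_index_le N)
    _ = mapOfLE (permKernel_index_le N) ((φ _).symm (φ _ (proj (NormalFI.permKernel G _) x))) :=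
        congrArg (fun q => mapOfLE _ ((φ _).symm q)) (hlevel _)
    _ = proj N x :=
        (congrArg (mapOfLE _) ((φ _).symm_apply_apply _)).trans
          (mapOfLE_proj (N := NormalFI.permKernel G N.1.index) (M := N) _ x)

variable (φ) in
noncomputable def completionEquiv [Group.FG H] (hφ : IsCompatible φ) :
    ProfiniteCompletion G ≃* ProfiniteCompletion H :=
  MonoidHom.toMulEquiv (completionMap φ hφ) (completionMap (fun n => (φ n).symm) hφ.symm)
    (MonoidHom.ext (completionMap_symm_completionMap hφ))
    (MonoidHom.ext (completionMap_symm_completionMap (φ := fun n => (φ n).symm) hφ.symm))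

end CompletionMap

/-- Two finitely generated groups have isomorphic profinite completions (as topological
groups) if and only if they have the same finite quotients. -/
theorem profiniteCompletion_iso_iff_same_finite_quotients
    (Γ₁ Γ₂ : Type) [Group Γ₁] [Group Γ₂] (h₁ : Group.FG Γ₁) (h₂ : Group.FG Γ₂) :
    (∃ e : ProfiniteCompletion Γ₁ ≃* ProfiniteCompletion Γ₂,
        Continuous e ∧ Continuous e.symm) ↔
      (∀ (Q : Type) [Group Q] [Finite Q],
        (∃ f : Γ₁ →* Q, Function.Surjective f) ↔ (∃ f : Γ₂ →* Q, Function.Surjective f)) := by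
  constructor
  · rintro ⟨e, he, he_symm⟩ Q _ _
    exact ⟨fun ⟨f, hf⟩ => exists_surjective_of_profiniteCompletion_surjective
        e.symm.toMonoidHom he_symm e.symm.surjective hf,
      fun ⟨f, hf⟩ => exists_surjective_of_profiniteCompletion_surjective
        e.toMonoidHom he e.surjective hf⟩
  · intro hQ
    obtain ⟨φ, hφ⟩ := exists_isCompatible
      (fun n => (hQ (Γ₂ ⧸ permKernel Γ₂ n)).mpr ⟨mk' _, mk'_surjective _⟩)
      (fun n => (hQ (Γ₁ ⧸ permKernel Γ₁ n)).mp ⟨mk' _, mk'_surjective _⟩)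
    exact ⟨completionEquiv φ hφ, continuous_completionMap hφ, continuous_completionMap hφ.symm⟩
end
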